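/- arXiv:1801.09867 — 7 statements merged into one kernel-verified Lean document; each statement's English description precedes it below -/
import Mathlib

section
/- Lower bound for stationary points (case 1 < q < ∞): let x* ∈ ℝ^N, set r = Ax* − y and g ∈ ℝ^M with g_i = sgn(r_i)·|r_i|^{q−1}, and suppose the first-order condition sgn(x*_j)·p·|x*_j|^{p−1} + (1/α)·(Aᵀg)_j = 0 holds for every index j with x*_j ≠ 0. If x* has at least one nonzero entry, then max_j |(Aᵀg)_j| > 0 and every nonzero entry satisfies |x*_j| ≥ (p·α / max_j |(Aᵀg)_j|)^{1/(1−p)}. -/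
open Matrix
/-- Lower bound for stationary points of the ℓp-ℓq objective, case `1 < q < ∞`:
if the componentwise first-order condition holds at every nonzero coordinate of `x*`
and `x*` has a nonzero entry, then `max_j |(Aᵀg)_j| > 0` and every nonzero entry
satisfies `|x*_j| ≥ (pα / max_j |(Aᵀg)_j|)^(1/(1−p))`. -/
theorem stmt_5 {N M : ℕ} [NeZero N] (A : Matrix (Fin M) (Fin N) ℝ) (y : Fin M → ℝ)
    (p q α : ℝ) (hp0 : 0 < p) (hp1 : p < 1) (hq : 1 < q) (hα : 0 < α)
    (x : Fin N → ℝ) (g : Fin M → ℝ)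
    (hg : ∀ i, g i = Real.sign ((A.mulVec x - y) i) * |(A.mulVec x - y) i| ^ (q - 1))
    (hopt : ∀ j, x j ≠ 0 →
      Real.sign (x j) * p * |x j| ^ (p - 1) + (1 / α) * (Aᵀ.mulVec g) j = 0)
    (hne : ∃ j, x j ≠ 0) :
    0 < Finset.univ.sup' Finset.univ_nonempty (fun j => |(Aᵀ.mulVec g) j|) ∧
      ∀ j, x j ≠ 0 →
        (p * α / Finset.univ.sup' Finset.univ_nonempty (fun j => |(Aᵀ.mulVec g) j|))
            ^ (1 / (1 - p)) ≤ |x j| := by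
  set S := Finset.univ.sup' Finset.univ_nonempty (fun j => |(Aᵀ.mulVec g) j|) with hS
  have key : ∀ j, x j ≠ 0 → |(Aᵀ.mulVec g) j| = α * p * |x j| ^ (p - 1) := by
    intro j hj
    have h := hopt j hj
    have hsg : |Real.sign (x j)| = 1 := by
      rcases lt_or_gt_of_ne hj with h' | h'
      · rw [Real.sign_of_neg h']; norm_num
      · rw [Real.sign_of_pos h']; norm_num
    have heq : (1/α) * (Aᵀ.mulVec g) j = -(Real.sign (x j) * p * |x j| ^ (p-1)) := by
      linarith
    have habs := congrArg abs heq
    rw [abs_neg, abs_mul, abs_mul, abs_mul, hsg,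
      abs_of_pos (by positivity : (0:ℝ) < 1/α), abs_of_pos hp0,
      abs_of_nonneg (Real.rpow_nonneg (abs_nonneg _) _)] at habs
    field_simp at habs ⊢
    linarith
  obtain ⟨j0, hj0⟩ := hne
  have hxj0 : 0 < |x j0| := abs_pos.mpr hj0
  have hpow0 : 0 < |x j0| ^ (p - 1) := Real.rpow_pos_of_pos hxj0 _
  have hw0 : 0 < |(Aᵀ.mulVec g) j0| := by rw [key j0 hj0]; positivity
  have hSpos : 0 < S :=
    lt_of_lt_of_le hw0 (Finset.le_sup' (fun j => |(Aᵀ.mulVec g) j|) (Finset.mem_univ j0))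
  refine ⟨hSpos, fun j hj => ?_⟩
  have ht : 0 < |x j| := abs_pos.mpr hj
  have hpow : 0 < |x j| ^ (p - 1) := Real.rpow_pos_of_pos ht _
  have hle : α * p * |x j| ^ (p - 1) ≤ S := by
    rw [← key j hj]
    exact Finset.le_sup' (fun j => |(Aᵀ.mulVec g) j|) (Finset.mem_univ j)
  -- p α / S ≤ |x j| ^ (1 - p)
  have h1 : p * α / S ≤ |x j| ^ (1 - p) := by
    rw [show (1:ℝ) - p = -(p - 1) by ring, Real.rpow_neg (abs_nonneg _),
      div_le_iff₀ hSpos]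
    have hinv : (|x j| ^ (p - 1))⁻¹ * (|x j| ^ (p - 1)) = 1 := inv_mul_cancel₀ hpow.ne'
    nlinarith [mul_le_mul_of_nonneg_left hle (inv_nonneg.mpr hpow.le)]
  have hbase : 0 ≤ p * α / S := by positivity
  have hexp : (0:ℝ) ≤ 1 / (1 - p) := by
    have : (0:ℝ) < 1 - p := by linarith
    positivity
  have hfinal := Real.rpow_le_rpow hbase h1 hexp
  rwa [← Real.rpow_mul (abs_nonneg _), mul_one_div,
    div_self (by linarith : (1:ℝ) - p ≠ 0), Real.rpow_one] at hfinal
end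

section
/- Lower bound for stationary points (case q = 1): let x* ∈ ℝ^N and suppose there exists η ∈ ℝ^M with |η_i| ≤ 1 for all i such that sgn(x*_j)·p·|x*_j|^{p−1} + (1/α)·(Aᵀη)_j = 0 for every index j with x*_j ≠ 0. Then every nonzero entry satisfies |x*_j| ≥ (p·α / Σ_{i=1}^M |A_{ij}|)^{1/(1−p)}, where A_{ij} is the (i,j) entry of A. -/
open Matrix

/-- Lower bound for stationary points of the ℓp-ℓ₁ objective (case `q = 1`):
if there is `η ∈ ℝ^M` with `|η_i| ≤ 1` such that the componentwise first-order
condition holds at every nonzero coordinate of `x*`, then every nonzero entry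
satisfies `|x*_j| ≥ (pα / Σ_i |A_{ij}|)^(1/(1−p))`. -/
theorem stmt_6 {N M : ℕ} (A : Matrix (Fin M) (Fin N) ℝ)
    (p α : ℝ) (hp0 : 0 < p) (hp1 : p < 1) (hα : 0 < α)
    (x : Fin N → ℝ) (η : Fin M → ℝ) (hη : ∀ i, |η i| ≤ 1)
    (hopt : ∀ j, x j ≠ 0 →
      Real.sign (x j) * p * |x j| ^ (p - 1) + (1 / α) * (Aᵀ.mulVec η) j = 0) :
    ∀ j, x j ≠ 0 → (p * α / ∑ i, |A i j|) ^ (1 / (1 - p)) ≤ |x j| := by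
  intro j hj
  set S := ∑ i, |A i j| with hS
  have hxpos : 0 < |x j| := abs_pos.mpr hj
  have h1p : 0 < 1 - p := by linarith
  -- sign has absolute value 1
  have hsign : |Real.sign (x j)| = 1 := by
    rcases lt_or_gt_of_ne hj with h | h
    · rw [Real.sign_of_neg h]; simp
    · rw [Real.sign_of_pos h]; simp
  have heq := hopt j hj
  have hneg : Real.sign (x j) * p * |x j| ^ (p - 1)
      = -((1 / α) * (Aᵀ.mulVec η) j) := by linarith
  have hrpowpos : 0 < |x j| ^ (p - 1) := Real.rpow_pos_of_pos hxpos _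
  have habs : p * |x j| ^ (p - 1) = (1 / α) * |(Aᵀ.mulVec η) j| := by
    have := congrArg abs hneg
    rwa [abs_neg, abs_mul, abs_mul, hsign, one_mul, abs_mul,
      abs_of_pos hp0, abs_of_pos hrpowpos, abs_of_pos (by positivity : (0:ℝ) < 1/α)]
      at this
  -- bound the matrix-vector product
  have hmv : |(Aᵀ.mulVec η) j| ≤ S := by
    have : (Aᵀ.mulVec η) j = ∑ i, A i j * η i := by
      simp [Matrix.mulVec, dotProduct, Matrix.transpose_apply]
    rw [this]
    refine (Finset.abs_sum_le_sum_abs _ _).trans ?_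
    refine Finset.sum_le_sum fun i _ => ?_
    rw [abs_mul]
    calc |A i j| * |η i| ≤ |A i j| * 1 :=
          mul_le_mul_of_nonneg_left (hη i) (abs_nonneg _)
      _ = |A i j| := mul_one _
  have hkey : p * |x j| ^ (p - 1) ≤ S / α := by
    rw [habs]
    rw [show S / α = 1 / α * S by ring]
    exact mul_le_mul_of_nonneg_left hmv (by positivity)
  have hSpos : 0 < S := by
    by_contra h
    push_neg at h
    have : S / α ≤ 0 := div_nonpos_of_nonpos_of_nonneg h hα.le
    nlinarith
  -- rewrite |x|^(p-1) = (|x|^(1-p))⁻¹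
  have hinv : |x j| ^ (p - 1) = (|x j| ^ (1 - p))⁻¹ := by
    rw [← Real.rpow_neg hxpos.le]; ring_nf
  have hxp : 0 < |x j| ^ (1 - p) := Real.rpow_pos_of_pos hxpos _
  have h2 : p * α / S ≤ |x j| ^ (1 - p) := by
    rw [hinv] at hkey
    rw [div_le_iff₀ hSpos]
    have h3 : p ≤ S / α * |x j| ^ (1 - p) := by
      have := mul_le_mul_of_nonneg_right hkey hxp.le
      rwa [mul_assoc, inv_mul_cancel₀ hxp.ne', mul_one] at this
    nlinarith [mul_le_mul_of_nonneg_right h3 hα.le, div_mul_cancel₀ S hα.ne']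
  have := Real.rpow_le_rpow (by positivity) h2 (by positivity : (0:ℝ) ≤ 1 / (1 - p))
  rwa [← Real.rpow_mul hxpos.le, mul_one_div, div_self h1p.ne', Real.rpow_one] at this
end

section
/- Surrogate majorization: for every x ∈ ℝ^N with supp(x) ⊆ supp(x̄), one has F(x) ≥ E(x) + (β/2)·‖x − x̄‖₂², where F is the proximally linearized surrogate of E at x̄. -/
lemma rpow_concave_tangent {a b p : ℝ} (ha : 0 ≤ a) (hb : 0 < b)
    (hp0 : 0 < p) (hp1 : p < 1) :
    a ^ p ≤ b ^ p + p * b ^ (p - 1) * (a - b) := by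
  have hs : (-1 : ℝ) ≤ a / b - 1 := by
    have : 0 ≤ a / b := div_nonneg ha hb.le
    linarith
  have key := rpow_one_add_le_one_add_mul_self hs hp0.le hp1.le
  rw [add_sub_cancel] at key
  have hdiv : (a / b) ^ p = a ^ p / b ^ p := Real.div_rpow ha hb.le p
  rw [hdiv] at key
  have hbp : 0 < b ^ p := Real.rpow_pos_of_pos hb p
  have h2 : a ^ p ≤ (1 + p * (a / b - 1)) * b ^ p := by
    rw [← div_le_iff₀ hbp]; exact key
  calc a ^ p ≤ (1 + p * (a / b - 1)) * b ^ p := h2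
    _ = b ^ p + p * (b ^ p / b) * (a - b) := by
        field_simp
    _ = b ^ p + p * b ^ (p - 1) * (a - b) := by
        rw [← Real.rpow_sub_one hb.ne' p]

/-- Surrogate majorization: for every `x` with `supp(x) ⊆ supp(x̄)`,
`F(x) ≥ E(x) + (β/2)·‖x − x̄‖₂²`, where `F` is the proximally linearized surrogate
of the ℓp-ℓq objective `E` at `x̄`. -/
theorem stmt_9 {N M : ℕ} (A : Matrix (Fin M) (Fin N) ℝ) (y : Fin M → ℝ)
    (p q α β : ℝ) (hp0 : 0 < p) (hp1 : p < 1) (hq : 1 ≤ q) (hα : 0 < α) (hβ : 0 < β)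
    (xbar : EuclideanSpace ℝ (Fin N))
    (E F : EuclideanSpace ℝ (Fin N) → ℝ)
    (hE : ∀ x, E x = ∑ j, |x j| ^ p + (1 / (q * α)) * ∑ i, |(A.mulVec x - y) i| ^ q)
    (hF : ∀ x, F x =
        (∑ j ∈ Finset.univ.filter (fun j => xbar j ≠ 0),
          (|xbar j| ^ p + p * |xbar j| ^ (p - 1) * (|x j| - |xbar j|)))
        + (1 / (q * α)) * ∑ i, |(A.mulVec x - y) i| ^ q
        + (β / 2) * ‖x - xbar‖ ^ 2) :
    ∀ x : EuclideanSpace ℝ (Fin N), (∀ j, x j ≠ 0 → xbar j ≠ 0) →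
      E x + (β / 2) * ‖x - xbar‖ ^ 2 ≤ F x := by
  intro x hsupp
  rw [hE, hF]
  have key : ∑ j, |x j| ^ p ≤
      ∑ j ∈ Finset.univ.filter (fun j => xbar j ≠ 0),
        (|xbar j| ^ p + p * |xbar j| ^ (p - 1) * (|x j| - |xbar j|)) := by
    have h1 : ∑ j, |x j| ^ p
        = ∑ j ∈ Finset.univ.filter (fun j => xbar j ≠ 0), |x j| ^ p := by
      rw [eq_comm]
      apply Finset.sum_subset (Finset.filter_subset _ _)
      intro j _ hj
      simp only [Finset.mem_filter, Finset.mem_univ, true_and, not_not] at hj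
      have : x j = 0 := by
        by_contra hx
        exact hsupp j hx hj
      rw [this, abs_zero, Real.zero_rpow hp0.ne']
    rw [h1]
    apply Finset.sum_le_sum
    intro j hj
    simp only [Finset.mem_filter, Finset.mem_univ, true_and] at hj
    exact rpow_concave_tangent (abs_nonneg _) (abs_pos.mpr hj) hp0 hp1
  linarith
end

section
/- Exact sufficient decrease for the support-shrinking step: if x⁺ ∈ ℝ^N satisfies supp(x⁺) ⊆ supp(x̄) and F(x⁺) ≤ F(x) for every x ∈ ℝ^N with supp(x) ⊆ supp(x̄) (i.e., x⁺ minimizes the surrogate F over vectors supported in supp(x̄)), then E(x⁺) + (β/2)·‖x⁺ − x̄‖₂² ≤ E(x̄). -/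
lemma conc_aux {p a t : ℝ} (hp0 : 0 < p) (hp1 : p < 1) (ha : 0 < a) (ht : 0 ≤ t) :
    t ^ p ≤ a ^ p + p * a ^ (p - 1) * (t - a) := by
  have hb := rpow_one_add_le_one_add_mul_self
    (by have : 0 ≤ t / a := div_nonneg ht ha.le; linarith : (-1:ℝ) ≤ t/a - 1) hp0.le hp1.le
  rw [add_sub_cancel] at hb
  have h1 : (t / a) ^ p = t ^ p / a ^ p := Real.div_rpow ht ha.le p
  rw [h1] at hb
  have hap : (0:ℝ) < a ^ p := Real.rpow_pos_of_pos ha p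
  have := (div_le_iff₀ hap).mp hb
  calc t ^ p ≤ (1 + p * (t / a - 1)) * a ^ p := this
    _ = a ^ p + p * a ^ (p - 1) * (t - a) := by
        have h2 : a ^ (p - 1) = a ^ p / a := by
          rw [Real.rpow_sub ha, Real.rpow_one]
        rw [h2]
        field_simp

/-- Exact sufficient decrease for the support-shrinking step: if `x⁺` is supported in
`supp(x̄)` and minimizes the surrogate `F` over vectors supported in `supp(x̄)`, then
`E(x⁺) + (β/2)·‖x⁺ − x̄‖₂² ≤ E(x̄)`. -/
theorem stmt_10 {N M : ℕ} (A : Matrix (Fin M) (Fin N) ℝ) (y : Fin M → ℝ)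
    (p q α β : ℝ) (hp0 : 0 < p) (hp1 : p < 1) (hq : 1 ≤ q) (hα : 0 < α) (hβ : 0 < β)
    (xbar xplus : EuclideanSpace ℝ (Fin N))
    (E F : EuclideanSpace ℝ (Fin N) → ℝ)
    (hE : ∀ x, E x = ∑ j, |x j| ^ p + (1 / (q * α)) * ∑ i, |(A.mulVec x - y) i| ^ q)
    (hF : ∀ x, F x =
        (∑ j ∈ Finset.univ.filter (fun j => xbar j ≠ 0),
          (|xbar j| ^ p + p * |xbar j| ^ (p - 1) * (|x j| - |xbar j|)))
        + (1 / (q * α)) * ∑ i, |(A.mulVec x - y) i| ^ q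
        + (β / 2) * ‖x - xbar‖ ^ 2)
    (hsupp : ∀ j, xplus j ≠ 0 → xbar j ≠ 0)
    (hmin : ∀ x : EuclideanSpace ℝ (Fin N), (∀ j, x j ≠ 0 → xbar j ≠ 0) → F xplus ≤ F x) :
    E xplus + (β / 2) * ‖xplus - xbar‖ ^ 2 ≤ E xbar := by
  have key : F xplus ≤ F xbar := hmin xbar (fun j h => h)
  -- F x̄ = E x̄
  have hFE : F xbar = E xbar := by
    rw [hF, hE]
    have h1 : (∑ j ∈ Finset.univ.filter (fun j => xbar j ≠ 0),
        (|xbar j| ^ p + p * |xbar j| ^ (p - 1) * (|xbar j| - |xbar j|)))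
        = ∑ j, |xbar j| ^ p := by
      rw [Finset.sum_filter]
      apply Finset.sum_congr rfl
      intro j _
      by_cases h : xbar j = 0
      · simp [h, Real.zero_rpow hp0.ne']
      · simp [h]
    rw [h1]
    simp
  -- E x⁺ + pen ≤ F x⁺
  have hEF : E xplus + (β / 2) * ‖xplus - xbar‖ ^ 2 ≤ F xplus := by
    rw [hE, hF]
    have h2 : (∑ j, |xplus j| ^ p) ≤
        ∑ j ∈ Finset.univ.filter (fun j => xbar j ≠ 0),
          (|xbar j| ^ p + p * |xbar j| ^ (p - 1) * (|xplus j| - |xbar j|)) := by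
      have h3 : (∑ j, |xplus j| ^ p)
          = ∑ j ∈ Finset.univ.filter (fun j => xbar j ≠ 0), |xplus j| ^ p := by
        rw [Finset.sum_filter]
        apply Finset.sum_congr rfl
        intro j _
        by_cases h : xbar j = 0
        · have hx : xplus j = 0 := by
            by_contra hc; exact hsupp j hc h
          rw [hx, if_neg (not_not.mpr h), abs_zero, Real.zero_rpow hp0.ne']
        · simp [h]
      rw [h3]
      apply Finset.sum_le_sum
      intro j hj
      rw [Finset.mem_filter] at hj
      exact conc_aux hp0 hp1 (abs_pos.mpr hj.2) (abs_nonneg _)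
    linarith
  linarith [hFE ▸ key, hEF]
end

section
/- Inexact sufficient decrease: let 0 ≤ ε < 1, let x⁺ ∈ ℝ^N with supp(x⁺) ⊆ supp(x̄), and suppose there exists u ∈ ℝ^N with u_j = 0 for j ∉ supp(x̄) such that (i) the subgradient inequality F(w) ≥ F(x⁺) + ⟨u, w − x⁺⟩ holds for every w ∈ ℝ^N with supp(w) ⊆ supp(x̄), and (ii) ‖u‖₂ ≤ (β/2)·ε·‖x⁺ − x̄‖₂. Then E(x⁺) + (β/2)·(1−ε)·‖x⁺ − x̄‖₂² ≤ E(x̄). -/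
open scoped RealInnerProductSpace

lemma tangent_rpow {p a b : ℝ} (hp0 : 0 < p) (hp1 : p < 1) (ha : 0 < a) (hb : 0 ≤ b) :
    b ^ p ≤ a ^ p + p * a ^ (p - 1) * (b - a) := by
  have hs : (-1 : ℝ) ≤ b / a - 1 := by
    have : 0 ≤ b / a := div_nonneg hb ha.le
    linarith
  have key := rpow_one_add_le_one_add_mul_self hs hp0.le hp1.le
  have h1 : (1 + (b / a - 1)) = b / a := by ring
  rw [h1] at key
  have h2 : (b / a) ^ p = b ^ p / a ^ p := Real.div_rpow hb ha.le p
  rw [h2] at key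
  have hap : (0:ℝ) < a ^ p := Real.rpow_pos_of_pos ha p
  have key2 : b ^ p ≤ (1 + p * (b / a - 1)) * a ^ p := by
    rw [div_le_iff₀ hap] at key; linarith
  have h3 : (1 + p * (b / a - 1)) * a ^ p = a ^ p + p * (a ^ p / a) * (b - a) := by
    field_simp
  have h4 : a ^ p / a = a ^ (p - 1) := by
    rw [Real.rpow_sub ha, Real.rpow_one]
  rw [h3, h4] at key2
  exact key2

/-- Inexact sufficient decrease: if `x⁺` is supported in `supp(x̄)` and there is a
subgradient `u` of the surrogate `F` at `x⁺` (relative to vectors supported in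
`supp(x̄)`) with `‖u‖₂ ≤ (β/2)·ε·‖x⁺ − x̄‖₂`, then
`E(x⁺) + (β/2)(1−ε)‖x⁺ − x̄‖₂² ≤ E(x̄)`. -/
theorem stmt_11 {N M : ℕ} (A : Matrix (Fin M) (Fin N) ℝ) (y : Fin M → ℝ)
    (p q α β ε : ℝ) (hp0 : 0 < p) (hp1 : p < 1) (hq : 1 ≤ q) (hα : 0 < α) (hβ : 0 < β)
    (hε0 : 0 ≤ ε) (hε1 : ε < 1)
    (xbar xplus : EuclideanSpace ℝ (Fin N))
    (E F : EuclideanSpace ℝ (Fin N) → ℝ)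
    (hE : ∀ x, E x = ∑ j, |x j| ^ p + (1 / (q * α)) * ∑ i, |(A.mulVec x - y) i| ^ q)
    (hF : ∀ x, F x =
        (∑ j ∈ Finset.univ.filter (fun j => xbar j ≠ 0),
          (|xbar j| ^ p + p * |xbar j| ^ (p - 1) * (|x j| - |xbar j|)))
        + (1 / (q * α)) * ∑ i, |(A.mulVec x - y) i| ^ q
        + (β / 2) * ‖x - xbar‖ ^ 2)
    (hsupp : ∀ j, xplus j ≠ 0 → xbar j ≠ 0)
    (u : EuclideanSpace ℝ (Fin N))
    (hu0 : ∀ j, xbar j = 0 → u j = 0)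
    (hsub : ∀ w : EuclideanSpace ℝ (Fin N), (∀ j, w j ≠ 0 → xbar j ≠ 0) →
      F xplus + ⟪u, w - xplus⟫ ≤ F w)
    (hun : ‖u‖ ≤ (β / 2) * ε * ‖xplus - xbar‖) :
    E xplus + (β / 2) * (1 - ε) * ‖xplus - xbar‖ ^ 2 ≤ E xbar := by
  have h1 := hsub xbar (fun j h => h)
  -- F xbar = E xbar
  have hFbar : F xbar = E xbar := by
    rw [hF, hE]
    have hsum : (∑ j ∈ Finset.univ.filter (fun j => xbar j ≠ 0),
        (|xbar j| ^ p + p * |xbar j| ^ (p - 1) * (|xbar j| - |xbar j|)))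
        = ∑ j, |xbar j| ^ p := by
      simp only [sub_self, mul_zero, add_zero]
      apply Finset.sum_filter_of_ne
      intro j _ hne hz
      apply hne
      rw [hz, abs_zero, Real.zero_rpow hp0.ne']
    rw [hsum]
    simp [sub_self]
  -- E xplus + (β/2)‖d‖² ≤ F xplus
  have h2 : E xplus + (β / 2) * ‖xplus - xbar‖ ^ 2 ≤ F xplus := by
    rw [hE, hF]
    have hmain : (∑ j, |xplus j| ^ p) ≤
        ∑ j ∈ Finset.univ.filter (fun j => xbar j ≠ 0),
          (|xbar j| ^ p + p * |xbar j| ^ (p - 1) * (|xplus j| - |xbar j|)) := by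
      have hsum : (∑ j ∈ Finset.univ.filter (fun j => xbar j ≠ 0), |xplus j| ^ p)
          = ∑ j, |xplus j| ^ p := by
        apply Finset.sum_filter_of_ne
        intro j _ hne
        apply hsupp j
        intro h0
        apply hne
        rw [h0, abs_zero, Real.zero_rpow hp0.ne']
      rw [← hsum]
      apply Finset.sum_le_sum
      intro j hj
      rw [Finset.mem_filter] at hj
      exact tangent_rpow hp0 hp1 (abs_pos.mpr hj.2) (abs_nonneg _)
    linarith
  -- inner product bound
  have h3 : -(‖u‖ * ‖xplus - xbar‖) ≤ ⟪u, xbar - xplus⟫ := by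
    have := real_inner_le_norm u (xplus - xbar)
    have heq : ⟪u, xbar - xplus⟫ = -⟪u, xplus - xbar⟫ := by
      rw [← inner_neg_right]; congr 1; abel
    rw [heq]
    linarith
  have hd : (0:ℝ) ≤ ‖xplus - xbar‖ := norm_nonneg _
  have h4 : ‖u‖ * ‖xplus - xbar‖ ≤ (β / 2) * ε * ‖xplus - xbar‖ ^ 2 := by
    have := mul_le_mul_of_nonneg_right hun hd
    nlinarith
  rw [hFbar] at h1
  linarith
end

section
/- Lower and upper bound theory for the iterates (case 1 < q < ∞): let S ⊆ {1,…,N} be nonempty, K ∈ ℕ, β > 0, 0 ≤ ε < 1, and let (x^{(k)})_{k≥K} be a bounded sequence in ℝ^N such that supp(x^{(k)}) = S for all k ≥ K. Suppose that for every k ≥ K there is u^{(k+1)} ∈ ℝ^S with ‖u^{(k+1)}‖₂ ≤ (β/2)·ε·‖x^{(k+1)} − x^{(k)}‖₂ such that for every j ∈ S: sgn(x_j^{(k+1)})·p·|x_j^{(k)}|^{p−1} + β·(x_j^{(k+1)} − x_j^{(k)}) + (1/α)·(Aᵀ g^{(k+1)})_j = u_j^{(k+1)}, where g^{(k+1)}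 ∈ ℝ^M has entries g_i^{(k+1)} = sgn((Ax^{(k+1)} − y)_i)·|(Ax^{(k+1)} − y)_i|^{q−1}. Then there exist constants 0 < c ≤ C < ∞ such that for every k ≥ K and every j ∈ {1,…,N}, either x_j^{(k)} = 0 or c ≤ |x_j^{(k)}| ≤ C. -/
open Matrix

lemma coord_abs_le_norm {n : ℕ} (v : EuclideanSpace ℝ (Fin n)) (j : Fin n) :
    |v j| ≤ ‖v‖ := by
  rw [EuclideanSpace.norm_eq]
  rw [show |v j| = Real.sqrt (|v j| ^ 2) by rw [Real.sqrt_sq_eq_abs, abs_abs]]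
  apply Real.sqrt_le_sqrt
  have : ‖v j‖ ^ 2 ≤ ∑ i, ‖v i‖ ^ 2 :=
    Finset.single_le_sum (f := fun i => ‖v i‖ ^ 2) (fun i _ => by positivity)
      (Finset.mem_univ j)
  simpa [Real.norm_eq_abs] using this

/-- Lower and upper bound theory for the iterates (case `1 < q < ∞`): a bounded
sequence with fixed nonempty support `S` satisfying the inexact first-order
optimality condition of the proximally linearized support-shrinking subproblem has
entries uniformly bounded away from zero and from above on the support. -/
theorem stmt_14 {N M : ℕ} (A : Matrix (Fin M) (Fin N) ℝ) (y : Fin M → ℝ)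
    (p q α β ε : ℝ) (hp0 : 0 < p) (hp1 : p < 1) (hq : 1 < q) (hα : 0 < α) (hβ : 0 < β)
    (hε0 : 0 ≤ ε) (hε1 : ε < 1)
    (S : Finset (Fin N)) (hS : S.Nonempty) (K : ℕ)
    (x : ℕ → EuclideanSpace ℝ (Fin N))
    (hbdd : ∃ R : ℝ, ∀ k, K ≤ k → ‖x k‖ ≤ R)
    (hsupp : ∀ k, K ≤ k → ∀ j, x k j ≠ 0 ↔ j ∈ S)
    (hopt : ∀ k, K ≤ k → ∃ u : EuclideanSpace ℝ (Fin N),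
      (∀ j ∉ S, u j = 0) ∧
      ‖u‖ ≤ (β / 2) * ε * ‖x (k + 1) - x k‖ ∧
      ∀ j ∈ S,
        Real.sign (x (k + 1) j) * p * |x k j| ^ (p - 1)
          + β * (x (k + 1) j - x k j)
          + (1 / α) * (Aᵀ.mulVec (fun i =>
              Real.sign ((A.mulVec (x (k + 1)) - y) i)
                * |(A.mulVec (x (k + 1)) - y) i| ^ (q - 1))) j
        = u j) :
    ∃ c C : ℝ, 0 < c ∧ c ≤ C ∧
      ∀ k, K ≤ k → ∀ j, x k j = 0 ∨ (c ≤ |x k j| ∧ |x k j| ≤ C) := by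
  obtain ⟨R₀, hR₀⟩ := hbdd
  set R : ℝ := max R₀ 0 with hRdef
  have hR : ∀ k, K ≤ k → ‖x k‖ ≤ R := fun k hk => (hR₀ k hk).trans (le_max_left _ _)
  have hR0 : 0 ≤ R := le_max_right _ _
  set W : ℝ := (∑ i, ∑ l, |A i l|) * R + ∑ i, |y i| with hWdef
  have hW0 : 0 ≤ W := by positivity
  set G : ℝ := W ^ (q - 1) with hGdef
  have hG0 : 0 ≤ G := Real.rpow_nonneg hW0 _
  set T : ℝ := ∑ i, ∑ l, |A i l| with hTdef
  have hT0 : 0 ≤ T := by positivity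
  set B : ℝ := β * R + β * (2 * R) + (1 / α) * (T * G) + 1 with hBdef
  have hB : 0 < B := by positivity
  set c : ℝ := (p / B) ^ (1 / (1 - p)) with hcdef
  have hc : 0 < c := Real.rpow_pos_of_pos (div_pos hp0 hB) _
  refine ⟨c, max R c, hc, le_max_right _ _, ?_⟩
  intro k hk j
  by_cases hx0 : x k j = 0
  · exact Or.inl hx0
  have hub : |x k j| ≤ max R c := le_trans (coord_abs_le_norm _ _)
    (le_trans (hR k hk) (le_max_left _ _))
  refine Or.inr ⟨?_, hub⟩
  -- lower bound
  have hjS : j ∈ S := (hsupp k hk j).mp hx0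
  obtain ⟨u, hu0, hunorm, heq⟩ := hopt k hk
  have heqj := heq j hjS
  set t := |x k j| with htdef
  have ht : 0 < t := abs_pos.mpr hx0
  have hx1 : x (k + 1) j ≠ 0 := (hsupp (k + 1) (by omega) j).mpr hjS
  have hsgn : |Real.sign (x (k + 1) j)| = 1 := by
    rcases Real.sign_apply_eq_of_ne_zero _ hx1 with h | h <;> rw [h] <;> norm_num
  -- bound on the residual entries
  have hres : ∀ i, |(A.mulVec (x (k + 1)) - y) i| ≤ W := by
    intro i
    have h1 : |(A.mulVec (x (k + 1)) - y) i| ≤ ∑ l, |A i l| * |x (k + 1) l| + |y i| := by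
      simp only [Pi.sub_apply, Matrix.mulVec, dotProduct]
      calc |∑ l, A i l * x (k + 1) l - y i|
          ≤ |∑ l, A i l * x (k + 1) l| + |y i| := abs_sub _ _
        _ ≤ (∑ l, |A i l * x (k + 1) l|) + |y i| := by
            gcongr; exact Finset.abs_sum_le_sum_abs _ _
        _ = ∑ l, |A i l| * |x (k + 1) l| + |y i| := by simp [abs_mul]
    have h2 : ∑ l, |A i l| * |x (k + 1) l| ≤ (∑ l, |A i l|) * R := by
      rw [Finset.sum_mul]
      refine Finset.sum_le_sum fun l _ => ?_
      exact mul_le_mul_of_nonneg_left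
        (le_trans (coord_abs_le_norm _ _) (hR (k + 1) (by omega))) (abs_nonneg _)
    have h3 : (∑ l, |A i l|) * R ≤ T * R := by
      apply mul_le_mul_of_nonneg_right _ hR0
      exact Finset.single_le_sum (f := fun i => ∑ l, |A i l|)
        (fun i _ => by positivity) (Finset.mem_univ i)
    have h4 : |y i| ≤ ∑ i, |y i| :=
      Finset.single_le_sum (f := fun i => |y i|) (fun i _ => abs_nonneg _)
        (Finset.mem_univ i)
    rw [hWdef]
    calc |(A.mulVec (x (k + 1)) - y) i| ≤ ∑ l, |A i l| * |x (k + 1) l| + |y i| := h1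
      _ ≤ T * R + ∑ i, |y i| := add_le_add (h2.trans h3) h4
  -- bound on g
  set g : Fin M → ℝ := fun i =>
    Real.sign ((A.mulVec (x (k + 1)) - y) i)
      * |(A.mulVec (x (k + 1)) - y) i| ^ (q - 1) with hgdef
  have hg : ∀ i, |g i| ≤ G := by
    intro i
    rw [hgdef, abs_mul, abs_of_nonneg (Real.rpow_nonneg (abs_nonneg _) _)]
    have h5 : |Real.sign ((A.mulVec (x (k + 1)) - y) i)| ≤ 1 := by
      rcases Real.sign_apply_eq ((A.mulVec (x (k + 1)) - y) i) with h | h | h <;>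
        rw [h] <;> norm_num
    calc |Real.sign ((A.mulVec (x (k + 1)) - y) i)|
          * |(A.mulVec (x (k + 1)) - y) i| ^ (q - 1)
        ≤ 1 * |(A.mulVec (x (k + 1)) - y) i| ^ (q - 1) :=
          mul_le_mul_of_nonneg_right h5 (Real.rpow_nonneg (abs_nonneg _) _)
      _ = |(A.mulVec (x (k + 1)) - y) i| ^ (q - 1) := one_mul _
      _ ≤ W ^ (q - 1) :=
          Real.rpow_le_rpow (abs_nonneg _) (hres i) (by linarith)
  -- bound on the j-th entry of Aᵀ g
  have hw : |(Aᵀ.mulVec g) j| ≤ T * G := by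
    simp only [Matrix.mulVec, dotProduct, Matrix.transpose_apply]
    calc |∑ i, A i j * g i| ≤ ∑ i, |A i j * g i| := Finset.abs_sum_le_sum_abs _ _
      _ = ∑ i, |A i j| * |g i| := by simp [abs_mul]
      _ ≤ ∑ i, |A i j| * G :=
          Finset.sum_le_sum fun i _ =>
            mul_le_mul_of_nonneg_left (hg i) (abs_nonneg _)
      _ = (∑ i, |A i j|) * G := (Finset.sum_mul _ _ _).symm
      _ ≤ T * G := by
          apply mul_le_mul_of_nonneg_right _ hG0
          refine Finset.sum_le_sum fun i _ => ?_
          exact Finset.single_le_sum (f := fun l => |A i l|)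
            (fun l _ => abs_nonneg _) (Finset.mem_univ j)
  -- bound on the difference term
  have hΔ : |x (k + 1) j - x k j| ≤ 2 * R := by
    have h6 : |(x (k + 1) - x k) j| ≤ ‖x (k + 1) - x k‖ := coord_abs_le_norm _ _
    have h7 : ‖x (k + 1) - x k‖ ≤ 2 * R := by
      calc ‖x (k + 1) - x k‖ ≤ ‖x (k + 1)‖ + ‖x k‖ := norm_sub_le _ _
        _ ≤ 2 * R := by linarith [hR (k + 1) (by omega : K ≤ k + 1), hR k hk]
    simpa using h6.trans h7
  -- bound on u j
  have hu : |u j| ≤ β * R := by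
    have h8 : ‖x (k + 1) - x k‖ ≤ 2 * R := by
      calc ‖x (k + 1) - x k‖ ≤ ‖x (k + 1)‖ + ‖x k‖ := norm_sub_le _ _
        _ ≤ 2 * R := by linarith [hR (k + 1) (by omega : K ≤ k + 1), hR k hk]
    calc |u j| ≤ ‖u‖ := coord_abs_le_norm _ _
      _ ≤ (β / 2) * ε * ‖x (k + 1) - x k‖ := hunorm
      _ ≤ (β / 2) * 1 * (2 * R) := by
          apply mul_le_mul (by nlinarith) h8 (norm_nonneg _) (by positivity)
      _ = β * R := by ring
  -- key estimate
  have key : p * t ^ (p - 1) ≤ B := by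
    have h9 : Real.sign (x (k + 1) j) * p * t ^ (p - 1)
        = u j - β * (x (k + 1) j - x k j) - (1 / α) * (Aᵀ.mulVec g) j := by
      rw [hgdef]; linarith [heqj]
    have h10 : p * t ^ (p - 1) = |Real.sign (x (k + 1) j) * p * t ^ (p - 1)| := by
      rw [abs_mul, abs_mul, hsgn, one_mul, abs_of_pos hp0,
        abs_of_nonneg (Real.rpow_nonneg (abs_nonneg _) _)]
    rw [h10, h9]
    have h11 : |u j - β * (x (k + 1) j - x k j) - (1 / α) * (Aᵀ.mulVec g) j|
        ≤ |u j| + |β * (x (k + 1) j - x k j)| + |(1 / α) * (Aᵀ.mulVec g) j| := by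
      calc |u j - β * (x (k + 1) j - x k j) - (1 / α) * (Aᵀ.mulVec g) j|
          ≤ |u j - β * (x (k + 1) j - x k j)| + |(1 / α) * (Aᵀ.mulVec g) j| :=
            abs_sub _ _
        _ ≤ |u j| + |β * (x (k + 1) j - x k j)| + |(1 / α) * (Aᵀ.mulVec g) j| :=
            add_le_add_left (abs_sub _ _) _
    have h12 : |β * (x (k + 1) j - x k j)| ≤ β * (2 * R) := by
      rw [abs_mul, abs_of_pos hβ]
      exact mul_le_mul_of_nonneg_left hΔ hβ.le
    have h13 : |(1 / α) * (Aᵀ.mulVec g) j| ≤ (1 / α) * (T * G) := by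
      rw [abs_mul, abs_of_pos (by positivity : (0:ℝ) < 1 / α)]
      exact mul_le_mul_of_nonneg_left hw (by positivity)
    rw [hBdef]
    linarith [h11, h12, h13, hu]
  -- convert to a lower bound on t
  have ht1 : 0 < t ^ (1 - p) := Real.rpow_pos_of_pos ht _
  have h14 : p ≤ B * t ^ (1 - p) := by
    have h15 := mul_le_mul_of_nonneg_right key ht1.le
    rwa [mul_assoc, ← Real.rpow_add ht, show p - 1 + (1 - p) = 0 by ring,
      Real.rpow_zero, mul_one] at h15
  have h16 : p / B ≤ t ^ (1 - p) := by
    rw [div_le_iff₀ hB]; linarith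
  have h1p : (0:ℝ) ≤ 1 / (1 - p) := by
    have hh : (0:ℝ) < 1 - p := by linarith
    positivity
  have h17 := Real.rpow_le_rpow (div_pos hp0 hB).le h16 h1p
  rwa [← Real.rpow_mul ht.le, mul_one_div_cancel (by linarith : (1:ℝ) - p ≠ 0),
    Real.rpow_one] at h17
end

section
/- Subgradient lower bound for the iterates gap (case 1 < q < ∞): let S ⊆ {1,…,N}, c > 0, β > 0, 0 ≤ ε < 1, and let x, x⁺ ∈ ℝ^N with supp(x) = supp(x⁺) = S and |x_j| ≥ c, |x⁺_j| ≥ c for all j ∈ S. Suppose there is u ∈ ℝ^S with ‖u‖₂ ≤ (β/2)·ε·‖x⁺ − x‖₂ such that for every j ∈ S: sgn(x⁺_j)·p·|x_j|^{p−1} + β·(x⁺_j − x_j) + (1/α)·(Aᵀg)_j = u_j, where g ∈ ℝ^M has entries g_i = sgn((Ax⁺ − y)_i)·|(Ax⁺ − y)_i|^{q−1}. Define v ∈ ℝ^N by v_j = sgn(x⁺_j)·p·|x⁺_j|^{p−1} + (1/α)·(Aᵀg)_j for j ∈ S and v_j = 0 for j ∉ S. Then ‖v‖₂ ≤ ( p(1−p)c^{p−2}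 + (β/2)·(ε + 2) )·‖x⁺ − x‖₂. -/
open Matrix

lemma rpow_lipschitz_aux {p c a b : ℝ} (hp0 : 0 < p) (hp1 : p < 1) (hc : 0 < c)
    (ha : c ≤ a) (hb : c ≤ b) :
    |b ^ (p - 1) - a ^ (p - 1)| ≤ (1 - p) * c ^ (p - 2) * |b - a| := by
  have key := Convex.norm_image_sub_le_of_norm_hasDerivWithin_le
    (f := fun t : ℝ => t ^ (p - 1)) (f' := fun t : ℝ => (p - 1) * t ^ (p - 1 - 1))
    (s := Set.Ici c) (C := (1 - p) * c ^ (p - 2))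
    (fun t ht => by
      have : HasDerivAt (fun t : ℝ => t ^ (p - 1)) ((p - 1) * t ^ (p - 1 - 1)) t :=
        Real.hasDerivAt_rpow_const (Or.inl (ne_of_gt (lt_of_lt_of_le hc ht)))
      exact this.hasDerivWithinAt)
    (fun t ht => by
      have ht0 : 0 < t := lt_of_lt_of_le hc ht
      have h1 : t ^ (p - 1 - 1) ≤ c ^ (p - 2) := by
        have : (p - 1 - 1 : ℝ) = p - 2 := by ring
        rw [this]
        exact Real.rpow_le_rpow_of_nonpos hc ht (by linarith)
      have h2 : (0:ℝ) ≤ t ^ (p - 1 - 1) := Real.rpow_nonneg ht0.le _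
      have : ‖(p - 1) * t ^ (p - 1 - 1)‖ = (1 - p) * t ^ (p - 1 - 1) := by
        rw [Real.norm_eq_abs, abs_mul, abs_of_neg (by linarith : p - 1 < 0),
          abs_of_nonneg h2]
        ring
      rw [this]
      exact mul_le_mul_of_nonneg_left h1 (by linarith))
    (convex_Ici c) ha hb
  simpa [Real.norm_eq_abs] using key

/-- Subgradient lower bound for the iterates gap (case `1 < q < ∞`): with entries of
`x` and `x⁺` on the common support `S` bounded below by `c > 0`, the subgradient `v`
of the ℓp-ℓq objective at `x⁺` built from the inexact optimality condition satisfies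
`‖v‖₂ ≤ (p(1−p)c^(p−2) + (β/2)(ε+2))·‖x⁺ − x‖₂`. -/
theorem stmt_15 {N M : ℕ} (A : Matrix (Fin M) (Fin N) ℝ) (y : Fin M → ℝ)
    (p q α β ε c : ℝ) (hp0 : 0 < p) (hp1 : p < 1) (hq : 1 < q) (hα : 0 < α) (hβ : 0 < β)
    (hε0 : 0 ≤ ε) (hε1 : ε < 1) (hc : 0 < c)
    (S : Finset (Fin N)) (x xplus : EuclideanSpace ℝ (Fin N))
    (hsx : ∀ j, x j ≠ 0 ↔ j ∈ S) (hsxp : ∀ j, xplus j ≠ 0 ↔ j ∈ S)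
    (hxc : ∀ j ∈ S, c ≤ |x j|) (hxpc : ∀ j ∈ S, c ≤ |xplus j|)
    (g : Fin M → ℝ)
    (hg : ∀ i, g i = Real.sign ((A.mulVec xplus - y) i) * |(A.mulVec xplus - y) i| ^ (q - 1))
    (u : EuclideanSpace ℝ (Fin N)) (hu0 : ∀ j ∉ S, u j = 0)
    (hun : ‖u‖ ≤ (β / 2) * ε * ‖xplus - x‖)
    (hopt : ∀ j ∈ S,
      Real.sign (xplus j) * p * |x j| ^ (p - 1) + β * (xplus j - x j)
        + (1 / α) * (Aᵀ.mulVec g) j = u j)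
    (v : EuclideanSpace ℝ (Fin N))
    (hv : ∀ j, v j = if j ∈ S then
        Real.sign (xplus j) * p * |xplus j| ^ (p - 1) + (1 / α) * (Aᵀ.mulVec g) j
      else 0) :
    ‖v‖ ≤ (p * (1 - p) * c ^ (p - 2) + (β / 2) * (ε + 2)) * ‖xplus - x‖ := by
  set L : ℝ := p * (1 - p) * c ^ (p - 2) with hL
  have hLnn : 0 ≤ L := by
    apply mul_nonneg (mul_nonneg hp0.le (by linarith)) (Real.rpow_nonneg hc.le _)
  -- the "rpow difference" vector
  set w : EuclideanSpace ℝ (Fin N) := WithLp.toLp 2 (fun j => if j ∈ S then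
      Real.sign (xplus j) * p * (|xplus j| ^ (p - 1) - |x j| ^ (p - 1)) else 0 :
      Fin N → ℝ) with hw
  -- decompose v
  have hvdec : v = w + u - β • (xplus - x) := by
    ext j
    have hvj := hv j
    show v j = w j + u j - β * (xplus j - x j)
    by_cases hj : j ∈ S
    · have ho := hopt j hj
      have hwj : w j = Real.sign (xplus j) * p * (|xplus j| ^ (p - 1) - |x j| ^ (p - 1)) := by
        simp [hw, hj]
      rw [hvj, if_pos hj, hwj]
      have : (1 / α) * (Aᵀ.mulVec g) j
          = u j - Real.sign (xplus j) * p * |x j| ^ (p - 1) - β * (xplus j - x j) := by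
        linarith
      rw [this]; ring
    · have hx0 : x j = 0 := by
        by_contra h; exact hj ((hsx j).mp h)
      have hxp0 : xplus j = 0 := by
        by_contra h; exact hj ((hsxp j).mp h)
      have hwj : w j = 0 := by simp [hw, hj]
      rw [hvj, if_neg hj, hwj, hu0 j hj, hx0, hxp0]; ring
  -- pointwise bound on w
  have hwpt : ∀ j, |w j| ≤ L * |xplus j - x j| := by
    intro j
    by_cases hj : j ∈ S
    · have hwj : w j = Real.sign (xplus j) * p * (|xplus j| ^ (p - 1) - |x j| ^ (p - 1)) := by
        simp [hw, hj]
      have hsgn : |Real.sign (xplus j)| ≤ 1 := by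
        rcases Real.sign_apply_eq (xplus j) with h | h | h <;> rw [h] <;> norm_num
      have hlip := rpow_lipschitz_aux hp0 hp1 hc (hxc j hj) (hxpc j hj)
      have habs : |(|xplus j| - |x j|)| ≤ |xplus j - x j| := abs_abs_sub_abs_le_abs_sub _ _
      calc |w j| = |Real.sign (xplus j)| * p * |(|xplus j| ^ (p - 1) - |x j| ^ (p - 1))| := by
            rw [hwj, abs_mul, abs_mul, abs_of_pos hp0]
        _ ≤ 1 * p * ((1 - p) * c ^ (p - 2) * |(|xplus j| - |x j|)|) := by
            apply mul_le_mul (mul_le_mul_of_nonneg_right hsgn hp0.le) hlip (abs_nonneg _)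
            linarith
        _ ≤ 1 * p * ((1 - p) * c ^ (p - 2) * |xplus j - x j|) := by
            apply mul_le_mul_of_nonneg_left (mul_le_mul_of_nonneg_left habs
              (mul_nonneg (by linarith) (Real.rpow_nonneg hc.le _)))
            linarith
        _ = L * |xplus j - x j| := by rw [hL]; ring
    · have hwj : w j = 0 := by simp [hw, hj]
      rw [hwj]; simpa using mul_nonneg hLnn (abs_nonneg _)
  -- norm bound on w
  have hwn : ‖w‖ ≤ L * ‖xplus - x‖ := by
    rw [EuclideanSpace.norm_eq, EuclideanSpace.norm_eq]
    rw [← Real.sqrt_sq hLnn, ← Real.sqrt_mul (sq_nonneg L)]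
    apply Real.sqrt_le_sqrt
    rw [Finset.mul_sum]
    apply Finset.sum_le_sum
    intro j _
    have h1 : ‖w j‖ ≤ L * ‖(xplus - x) j‖ := by
      have : (xplus - x) j = xplus j - x j := rfl
      rw [this, Real.norm_eq_abs, Real.norm_eq_abs]
      exact hwpt j
    calc ‖w j‖ ^ 2 ≤ (L * ‖(xplus - x) j‖) ^ 2 := by
          apply sq_le_sq' _ h1
          have := norm_nonneg (w j)
          nlinarith [norm_nonneg ((xplus - x) j)]
      _ = L ^ 2 * ‖(xplus - x) j‖ ^ 2 := by ring
  -- conclude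
  calc ‖v‖ = ‖w + u - β • (xplus - x)‖ := by rw [hvdec]
    _ ≤ ‖w + u‖ + ‖β • (xplus - x)‖ := norm_sub_le _ _
    _ ≤ ‖w‖ + ‖u‖ + ‖β • (xplus - x)‖ := by
        have := norm_add_le w u; linarith
    _ = ‖w‖ + ‖u‖ + β * ‖xplus - x‖ := by
        rw [norm_smul, Real.norm_eq_abs, abs_of_pos hβ]
    _ ≤ L * ‖xplus - x‖ + (β / 2) * ε * ‖xplus - x‖ + β * ‖xplus - x‖ := by linarith
    _ = (p * (1 - p) * c ^ (p - 2) + (β / 2) * (ε + 2)) * ‖xplus - x‖ := by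
        rw [hL]; ring
end
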